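/- arXiv:1411.7056 — 4 statements merged into one kernel-verified Lean document; each statement's English description precedes it below -/
import Mathlib

section
/- Let N₀ ∈ ℕ and C > 0. If a sequence of complex numbers (F_N)_{N∈ℕ} satisfies (i) lim_{N→∞} |F_N|^{1/N} = 0, and (ii) |F_N| ≤ C·∑_{k=N+1}^{∞} |F_k| for all N ≥ N₀ (the series on the right converging absolutely, as guaranteed by (i)), then there exists N₁ ∈ ℕ such that F_N = 0 for all N ≥ N₁. -/
/-!
If `|F_N|^{1/N} → 0` then, for any `ε > 0`, the tails `T_n = ∑_{k ≥ n} |F_k|` are eventually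
`O(ε^n)`. Condition (ii) says `T_n ≤ (1 + C) T_{n+1}` beyond `N₀`, so a nonzero tail can
shrink at most geometrically with ratio `1 / (1 + C)`. Taking `ε < 1 / (1 + C)` forces the
tails, hence the `F_N`, to vanish.
-/

open Filter Topology

section GeometricLowerBound

variable {T : ℕ → ℝ} {K : ℝ} {n₀ : ℕ}

lemma le_pow_mul_of_le_mul_succ (hK : 0 ≤ K) (hT : ∀ n, n₀ ≤ n → T n ≤ K * T (n + 1))
    (m : ℕ) : T n₀ ≤ K ^ m * T (n₀ + m) := by
  induction m with
  | zero => simp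
  | succ m ih =>
    calc T n₀ ≤ K ^ m * T (n₀ + m) := ih
      _ ≤ K ^ m * (K * T (n₀ + m + 1)) :=
          mul_le_mul_of_nonneg_left (hT _ (Nat.le_add_right _ _)) (pow_nonneg hK m)
      _ = K ^ (m + 1) * T (n₀ + (m + 1)) := by rw [← add_assoc]; ring

lemma nonpos_of_le_mul_succ_of_le_pow {r B : ℝ} (hK : 0 ≤ K) (hr : 0 ≤ r) (hKr : K * r < 1)
    (hT : ∀ n, n₀ ≤ n → T n ≤ K * T (n + 1)) (hB : ∀ᶠ n in atTop, T n ≤ B * r ^ n) :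
    T n₀ ≤ 0 := by
  have hlim : Tendsto (fun m : ℕ => B * r ^ n₀ * (K * r) ^ m) atTop (𝓝 0) := by
    simpa using (tendsto_pow_atTop_nhds_zero_of_lt_one (by positivity) hKr).const_mul
      (B * r ^ n₀)
  obtain ⟨M, hM⟩ := eventually_atTop.mp hB
  refine ge_of_tendsto hlim ?_
  filter_upwards [eventually_ge_atTop M] with m hm
  calc T n₀ ≤ K ^ m * T (n₀ + m) := le_pow_mul_of_le_mul_succ hK hT m
    _ ≤ K ^ m * (B * r ^ (n₀ + m)) :=
        mul_le_mul_of_nonneg_left (hM _ (hm.trans (Nat.le_add_left m n₀))) (pow_nonneg hK m)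
    _ = B * r ^ n₀ * (K * r) ^ m := by ring

end GeometricLowerBound

section SuperexponentialDecay

variable {a : ℕ → ℝ}

lemma eventually_le_pow_of_tendsto_rpow_one_div (ha : ∀ n, 0 ≤ a n)
    (h : Tendsto (fun n : ℕ => a n ^ ((1 : ℝ) / n)) atTop (𝓝 0)) {ε : ℝ} (hε : 0 < ε) :
    ∀ᶠ n in atTop, a n ≤ ε ^ n := by
  filter_upwards [h.eventually (gt_mem_nhds hε), eventually_ne_atTop 0] with n hlt hn
  calc a n = (a n ^ ((n : ℝ)⁻¹)) ^ n := (Real.rpow_inv_natCast_pow (ha n) hn).symm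
    _ ≤ ε ^ n := by
      rw [← one_div]
      exact pow_le_pow_left₀ (Real.rpow_nonneg (ha n) _) hlt.le n

lemma tsum_nat_add_le_of_le_pow (ha : ∀ n, 0 ≤ a n) {ε : ℝ} (hε0 : 0 ≤ ε) (hε1 : ε < 1)
    {M : ℕ} (hM : ∀ n, M ≤ n → a n ≤ ε ^ n) {n : ℕ} (hn : M ≤ n) :
    ∑' k, a (n + k) ≤ (1 - ε)⁻¹ * ε ^ n := by
  have hle : ∀ k, a (n + k) ≤ ε ^ n * ε ^ k := fun k =>
    (hM _ (hn.trans (Nat.le_add_right n k))).trans_eq (pow_add ε n k)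
  have hgeom : Summable fun k : ℕ => ε ^ n * ε ^ k :=
    (summable_geometric_of_lt_one hε0 hε1).mul_left _
  calc ∑' k, a (n + k) ≤ ∑' k : ℕ, ε ^ n * ε ^ k :=
        (hgeom.of_nonneg_of_le (fun k => ha _) hle).tsum_le_tsum hle hgeom
    _ = (1 - ε)⁻¹ * ε ^ n := by
        rw [tsum_mul_left, tsum_geometric_of_lt_one hε0 hε1, mul_comm]

lemma tsum_nat_add_eq_add_tsum_nat_add (hs : Summable a) (n : ℕ) :
    ∑' k, a (n + k) = a n + ∑' k, a (n + 1 + k) := by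
  rw [Summable.tsum_eq_zero_add (f := fun k => a (n + k))
    (hs.comp_injective (add_right_injective n))]
  simp only [add_zero, add_right_comm n, add_assoc]

theorem eq_zero_of_le_mul_tsum_of_tendsto_rpow (ha : ∀ n, 0 ≤ a n)
    (h1 : Tendsto (fun n : ℕ => a n ^ ((1 : ℝ) / n)) atTop (𝓝 0)) {C : ℝ} (hC : 0 ≤ C)
    {N₀ : ℕ} (h2 : ∀ n, N₀ ≤ n → a n ≤ C * ∑' k, a (n + 1 + k)) {n : ℕ} (hn : N₀ < n) :
    a n = 0 := by
  set ε := (2 + C)⁻¹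
  have hε0 : 0 < ε := by positivity
  have hε1 : ε < 1 := inv_lt_one_of_one_lt₀ (by linarith)
  have hCε : (1 + C) * ε < 1 := by
    rw [← div_eq_mul_inv, div_lt_one (by positivity)]
    linarith
  have hdecay := eventually_le_pow_of_tendsto_rpow_one_div ha h1 hε0
  obtain ⟨M, hM⟩ := eventually_atTop.mp hdecay
  have hs : Summable a :=
    (summable_geometric_of_lt_one hε0.le hε1).of_norm_bounded_eventually_nat
      (by filter_upwards [hdecay] with n hn; rwa [Real.norm_of_nonneg (ha n)])
  set T : ℕ → ℝ := fun n => ∑' k, a (n + k)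
  have hstep : ∀ m, n ≤ m → T m ≤ (1 + C) * T (m + 1) := fun m hm => by
    have := h2 m (by omega)
    simp only [T, tsum_nat_add_eq_add_tsum_nat_add hs m]
    linarith
  have hTn : T n ≤ 0 := nonpos_of_le_mul_succ_of_le_pow (by linarith) hε0.le hCε hstep
    (eventually_atTop.mpr ⟨M, fun m hm => tsum_nat_add_le_of_le_pow ha hε0.le hε1 hM hm⟩)
  have han : a n ≤ T n :=
    (hs.comp_injective (add_right_injective n)).le_tsum 0 fun k _ => ha (n + k)
  exact le_antisymm (han.trans hTn) (ha n)

end SuperexponentialDecay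

/-- **Lemma 3.** Let `N₀ ∈ ℕ` and `C > 0`. If a sequence of complex numbers `(F_N)`
satisfies (i) `lim_{N→∞} |F_N|^{1/N} = 0` and (ii) `|F_N| ≤ C·∑_{k=N+1}^∞ |F_k|`
for all `N ≥ N₀`, then there is `N₁ ∈ ℕ` such that `F_N = 0` for all `N ≥ N₁`. -/
theorem lemma3 (N₀ : ℕ) (C : ℝ) (hC : 0 < C) (F : ℕ → ℂ)
    (h1 : Tendsto (fun N : ℕ => ‖F N‖ ^ ((1 : ℝ) / N)) atTop (𝓝 0))
    (h2 : ∀ N : ℕ, N₀ ≤ N →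
      ‖F N‖ ≤ C * ∑' k : ℕ, ‖F (N + 1 + k)‖) :
    ∃ N₁ : ℕ, ∀ N : ℕ, N₁ ≤ N → F N = 0 :=
  ⟨N₀ + 1, fun _ hN => norm_eq_zero.mp <|
    eq_zero_of_le_mul_tsum_of_tendsto_rpow (fun n => norm_nonneg (F n)) h1 hC.le h2 hN⟩
end

section
/- Let C > 0 and M ∈ ℕ. If a sequence of complex numbers (F_N) satisfies, for all N ≥ M, both |F_N| ≤ (1/(C+2))^N and |F_N| ≤ C·∑_{k=N+1}^{∞} |F_k| (the series converging absolutely), then for every nonnegative integer n and every N ≥ M one has |F_N| ≤ (C/(C+1))^n · (1/(C+2))^N. Consequently F_N = 0 for all N ≥ M. -/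
open Filter Topology

/-
If `f ≤ A q^N` on `N ≥ M`, summing the geometric tail gives `C ∑_{k>N} f k ≤ ρ A q^N` with
`ρ = C q / (1 - q)`, so the hypothesis `f N ≤ C ∑_{k>N} f k` improves the bound by the factor `ρ`.
Iterating gives `f N ≤ ρ^n A q^N` for every `n`; for `q = 1/(C+2)` one has `ρ = C/(C+1) < 1`,
and letting `n → ∞` forces `f N = 0`.
-/

section GeometricTail

variable {f : ℕ → ℝ} {M : ℕ} {A C q : ℝ}

theorem tsum_tail_le_of_le_geometric (hq0 : 0 ≤ q) (hq1 : q < 1) (hf0 : ∀ k, 0 ≤ f k) {N : ℕ}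
    (hf : ∀ k, N < k → f k ≤ A * q ^ k) :
    ∑' k, f (N + 1 + k) ≤ A * q ^ (N + 1) / (1 - q) := by
  have hle : ∀ k, f (N + 1 + k) ≤ A * q ^ (N + 1) * q ^ k := fun k => by
    rw [mul_assoc, ← pow_add]; exact hf _ (by omega)
  have hgeo : Summable fun k => A * q ^ (N + 1) * q ^ k :=
    (summable_geometric_of_lt_one hq0 hq1).mul_left _
  calc ∑' k, f (N + 1 + k)
      ≤ ∑' k, A * q ^ (N + 1) * q ^ k :=
        (hgeo.of_nonneg_of_le (fun k => hf0 _) hle).tsum_le_tsum hle hgeo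
    _ = A * q ^ (N + 1) / (1 - q) := by
        rw [tsum_mul_left, tsum_geometric_of_lt_one hq0 hq1, div_eq_mul_inv]

variable (hC : 0 ≤ C) (hq0 : 0 ≤ q) (hq1 : q < 1) (hf0 : ∀ k, 0 ≤ f k)
  (htail : ∀ N, M ≤ N → f N ≤ C * ∑' k, f (N + 1 + k))
include hC hq0 hq1 hf0 htail

theorem le_mul_geometric_of_le_tail (hA : ∀ N, M ≤ N → f N ≤ A * q ^ N) {N : ℕ} (hN : M ≤ N) :
    f N ≤ C * q / (1 - q) * A * q ^ N := by
  have hq1' : 0 < 1 - q := sub_pos.mpr hq1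
  calc f N ≤ C * ∑' k, f (N + 1 + k) := htail N hN
    _ ≤ C * (A * q ^ (N + 1) / (1 - q)) := by
        gcongr
        exact tsum_tail_le_of_le_geometric hq0 hq1 hf0 fun k hk => hA k (by omega)
    _ = C * q / (1 - q) * A * q ^ N := by
        field_simp
        ring

theorem le_pow_mul_geometric_of_le_tail (hA : ∀ N, M ≤ N → f N ≤ A * q ^ N) (n : ℕ) :
    ∀ N, M ≤ N → f N ≤ (C * q / (1 - q)) ^ n * A * q ^ N := by
  induction n with
  | zero => simpa using hA
  | succ n ih =>
    intro N hN
    calc f N ≤ C * q / (1 - q) * ((C * q / (1 - q)) ^ n * A) * q ^ N :=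
          le_mul_geometric_of_le_tail hC hq0 hq1 hf0 htail ih hN
      _ = (C * q / (1 - q)) ^ (n + 1) * A * q ^ N := by ring

theorem eq_zero_of_le_tail (hρ : C * q / (1 - q) < 1) (hA : ∀ N, M ≤ N → f N ≤ A * q ^ N)
    {N : ℕ} (hN : M ≤ N) : f N = 0 := by
  have hρ0 : 0 ≤ C * q / (1 - q) := div_nonneg (mul_nonneg hC hq0) (sub_pos.mpr hq1).le
  have hlim : Tendsto (fun n => (C * q / (1 - q)) ^ n * A * q ^ N) atTop (𝓝 0) := by
    simpa using ((tendsto_pow_atTop_nhds_zero_of_lt_one hρ0 hρ).mul_const A).mul_const (q ^ N)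
  refine le_antisymm ?_ (hf0 N)
  exact ge_of_tendsto' hlim fun n => le_pow_mul_geometric_of_le_tail hC hq0 hq1 hf0 htail hA n N hN

end GeometricTail

theorem mul_one_div_add_two_div_one_sub {C : ℝ} (hC : 0 ≤ C) :
    C * (1 / (C + 2)) / (1 - 1 / (C + 2)) = C / (C + 1) := by
  have hC2 : C + 2 ≠ 0 := by positivity
  rw [mul_one_div, one_sub_div hC2, div_div_div_cancel_right₀ hC2]
  ring_nf

/-- Let `C > 0` and `M ∈ ℕ`. If a sequence of complex numbers `(F_N)` satisfies, for all
`N ≥ M`, both `|F_N| ≤ (1/(C+2))^N` and `|F_N| ≤ C·∑_{k=N+1}^∞ |F_k|` (the series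
converging absolutely), then for every nonnegative integer `n` and every `N ≥ M` one has
`|F_N| ≤ (C/(C+1))^n · (1/(C+2))^N`. Consequently `F_N = 0` for all `N ≥ M`. -/
theorem claim_in_lemma3 (M : ℕ) (C : ℝ) (hC : 0 < C) (F : ℕ → ℂ)
    (h1 : ∀ N : ℕ, M ≤ N → ‖F N‖ ≤ (1 / (C + 2)) ^ N)
    (h2 : ∀ N : ℕ, M ≤ N →
      ‖F N‖ ≤ C * ∑' k : ℕ, ‖F (N + 1 + k)‖) :
    (∀ n N : ℕ, M ≤ N →
      ‖F N‖ ≤ (C / (C + 1)) ^ n * (1 / (C + 2)) ^ N) ∧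
    (∀ N : ℕ, M ≤ N → F N = 0) := by
  have hq0 : (0 : ℝ) ≤ 1 / (C + 2) := by positivity
  have hq1 : 1 / (C + 2) < 1 := by rw [div_lt_one (by positivity)]; linarith
  have hρ := mul_one_div_add_two_div_one_sub hC.le
  have hA : ∀ N, M ≤ N → ‖F N‖ ≤ 1 * (1 / (C + 2)) ^ N := by simpa using h1
  have hf0 : ∀ k, 0 ≤ ‖F k‖ := fun k => norm_nonneg _
  refine ⟨fun n N hN => ?_, fun N hN => ?_⟩
  · simpa only [hρ, mul_one] using le_pow_mul_geometric_of_le_tail hC.le hq0 hq1 hf0 h2 hA n N hN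
  · refine norm_eq_zero.mp (eq_zero_of_le_tail hC.le hq0 hq1 hf0 h2 ?_ hA hN)
    rw [hρ, div_lt_one (by positivity)]
    linarith
end

section
/- Suppose μ ∈ R(E). Then κ_n/κ_{n+1} → 1/γ as n → ∞, where γ := lim_{z→∞} Φ(z)/z (under the paper's normalization, 1/γ is the logarithmic capacity of E). -/
open MeasureTheory Polynomial Filter Topology Set
open scoped ENNReal

/-- The inner product `⟨g,h⟩_μ := ∫ g(ζ)·conj(h(ζ)) dμ(ζ)`. -/
noncomputable def innerMu (μ : Measure ℂ) (g h : ℂ → ℂ) : ℂ :=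
  ∫ ζ, g ζ * (starRingEnd ℂ) (h ζ) ∂μ

/-- The (topological) support of a measure on `ℂ`: the set of points all of whose
neighborhoods have positive measure. -/
def measSupp (μ : Measure ℂ) : Set ℂ :=
  {z : ℂ | ∀ U ∈ nhds z, μ U ≠ 0}

/-- The second type functions `s_n(z) := ∫ conj(p_n(ζ))/(z − ζ) dμ(ζ)`. -/
noncomputable def secondKind (μ : Measure ℂ) (p : ℕ → Polynomial ℂ) (n : ℕ) (z : ℂ) : ℂ :=
  ∫ ζ, (starRingEnd ℂ) ((p n).eval ζ) / (z - ζ) ∂μ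

/-!
Orthogonality forces the zeros of `p n` into every closed disc `‖z‖ ≤ B` containing `supp μ`: if
`p n = (X - z₀) q` with `‖z₀‖ > B`, then `⟨p n, q⟩ = 0` reads `∫ (ζ - z₀) |q ζ|² dμ = 0`, and as the
line through `z₀` orthogonal to `z₀` separates `z₀` from the disc, `q` must vanish on the infinite set
`supp μ`. So `p n / p (n + 1)` and `1 / Φ` are holomorphic on `‖z‖ > B`; since
`z p n(z) / p (n + 1)(z) → κ_n / κ_{n+1}` and `z / Φ z → 1 / γ` at `∞`, their integrals over the circle
`‖z‖ = B + 1` are `2πi κ_n / κ_{n+1}` and `2πi / γ`, and uniform convergence on that circle passes to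
the integrals.
-/

section MeasureSupport

variable (μ : Measure ℂ)

lemma measSupp_eq_support : measSupp μ = μ.support := by
  ext z
  simp [measSupp, Measure.mem_support_iff_forall, pos_iff_ne_zero]

lemma ae_mem_measSupp : ∀ᵐ z ∂μ, z ∈ measSupp μ := by
  rw [measSupp_eq_support]
  exact Measure.support_mem_ae

variable {μ}

lemma integrable_of_measSupp_subset [IsFiniteMeasure μ] {K : Set ℂ} (hK : IsCompact K)
    (hsupp : measSupp μ ⊆ K) {F : Type*} [NormedAddCommGroup F] {f : ℂ → F}
    (hf : Continuous f) : Integrable f μ := by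
  obtain ⟨C, hC⟩ := hK.exists_bound_of_continuousOn hf.continuousOn
  refine (integrable_const C).mono' hf.aestronglyMeasurable ?_
  filter_upwards [ae_mem_measSupp μ] with z hz using hC z (hsupp hz)

lemma eq_zero_of_ae_eval_eq_zero (hinf : (measSupp μ).Infinite) {q : ℂ[X]}
    (hq : ∀ᵐ z ∂μ, q.eval z = 0) : q = 0 := by
  by_contra hq0
  refine hinf ((finite_setOfPred_isRoot hq0).subset fun z hz => ?_)
  by_contra hqz
  exact hz _ ((isOpen_ne_fun q.continuous continuous_const).mem_nhds hqz) (ae_iff.mp hq)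

end MeasureSupport

section Orthogonality

variable {μ : Measure ℂ} [IsFiniteMeasure μ] {K : Set ℂ}

lemma innerMu_mul_add (hK : IsCompact K) (hsupp : measSupp μ ⊆ K) {f g r : ℂ → ℂ}
    (hf : Continuous f) (hg : Continuous g) (hr : Continuous r) (c : ℂ) :
    innerMu μ f (fun z => c * g z + r z) = starRingEnd ℂ c * innerMu μ f g + innerMu μ f r := by
  have hfg : Integrable (fun ζ => f ζ * starRingEnd ℂ (g ζ)) μ :=
    integrable_of_measSupp_subset hK hsupp (by fun_prop)
  have hfr : Integrable (fun ζ => f ζ * starRingEnd ℂ (r ζ)) μ :=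
    integrable_of_measSupp_subset hK hsupp (by fun_prop)
  simp only [innerMu, map_add, map_mul, mul_add, ← integral_const_mul,
    ← integral_add (hfg.const_mul _) hfr]
  congr 1 with ζ
  ring

lemma innerMu_eq_zero_of_degree_lt (hK : IsCompact K) (hsupp : measSupp μ ⊆ K) {f : ℂ → ℂ}
    (hf : Continuous f) {p : ℕ → ℂ[X]} {m : ℕ} (hdeg : ∀ k < m, (p k).degree = k)
    (horth : ∀ k < m, innerMu μ f (fun z => (p k).eval z) = 0) :
    ∀ q : ℂ[X], q.degree < m → innerMu μ f (fun z => q.eval z) = 0 := by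
  suffices ∀ k ≤ m, ∀ q : ℂ[X], q.degree < k → innerMu μ f (fun z => q.eval z) = 0 from
    this m le_rfl
  intro k
  induction k with
  | zero =>
    intro _ q hq
    obtain rfl : q = 0 := degree_eq_bot.mp (Nat.WithBot.lt_zero_iff.mp hq)
    simp [innerMu]
  | succ k ih =>
    intro hk q hq
    have hpk : (p k).natDegree = k := natDegree_eq_of_degree_eq_some (hdeg k hk)
    have hlc : (p k).leadingCoeff ≠ 0 := leadingCoeff_ne_zero.mpr (ne_zero_of_degree_gt
      (n := ⊥) (by rw [hdeg k hk]; exact WithBot.bot_lt_coe k))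
    set c := q.coeff k / (p k).leadingCoeff
    have hr : (q - C c * p k).degree < k := by
      rw [degree_lt_iff_coeff_zero]
      intro j hj
      rcases hj.eq_or_lt with rfl | hj
      · have hkk : (p k).coeff k = (p k).leadingCoeff := by rw [leadingCoeff, hpk]
        rw [coeff_sub, coeff_C_mul, hkk, div_mul_cancel₀ _ hlc, sub_self]
      · rw [coeff_sub, coeff_C_mul, (degree_lt_iff_coeff_zero _ _).mp hq j hj,
          coeff_eq_zero_of_degree_lt (by rw [hdeg k hk]; exact_mod_cast hj), mul_zero, sub_zero]
    have hq' : (fun z => q.eval z) = fun z => c * (p k).eval z + (q - C c * p k).eval z := by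
      ext z
      simp
    rw [hq', innerMu_mul_add hK hsupp hf (p k).continuous (q - C c * p k).continuous,
      horth k hk, ih (Nat.le_of_succ_le hk) _ hr, mul_zero, add_zero]

end Orthogonality

section Zeros

open Metric

variable {μ : Measure ℂ} [IsFiniteMeasure μ] {B : ℝ}

lemma re_conj_mul_sub_le {z₀ ζ : ℂ} (hζ : ‖ζ‖ ≤ B) :
    (starRingEnd ℂ z₀ * (ζ - z₀)).re ≤ -(‖z₀‖ * (‖z₀‖ - B)) := by
  have h₁ : (starRingEnd ℂ z₀ * ζ).re ≤ ‖z₀‖ * B :=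
    (Complex.re_le_norm _).trans (by rw [norm_mul, Complex.norm_conj]; gcongr)
  have h₂ : (starRingEnd ℂ z₀ * z₀).re = ‖z₀‖ ^ 2 := by
    rw [mul_comm, Complex.mul_conj, Complex.normSq_eq_norm_sq, Complex.ofReal_re]
  rw [mul_sub, Complex.sub_re, h₂]
  nlinarith

lemma ae_eq_zero_of_integral_sub_mul_eq_zero (hB₀ : 0 ≤ B) (hB : measSupp μ ⊆ closedBall 0 B)
    {z₀ : ℂ} (hz₀ : B < ‖z₀‖) {w : ℂ → ℝ} (hw : 0 ≤ w) (hwc : Continuous w)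
    (h : ∫ ζ, (ζ - z₀) * (w ζ : ℂ) ∂μ = 0) : w =ᵐ[μ] 0 := by
  set d := ‖z₀‖ * (‖z₀‖ - B)
  have hd : 0 < d := mul_pos (hB₀.trans_lt hz₀) (sub_pos.mpr hz₀)
  have hwi : Integrable w μ := integrable_of_measSupp_subset (isCompact_closedBall 0 B) hB hwc
  have hi : Integrable (fun ζ => starRingEnd ℂ z₀ * ((ζ - z₀) * (w ζ : ℂ))) μ :=
    integrable_of_measSupp_subset (isCompact_closedBall 0 B) hB (by fun_prop)
  have hle : 0 ≤ -d * ∫ ζ, w ζ ∂μ :=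
    calc 0 = (starRingEnd ℂ z₀ * ∫ ζ, (ζ - z₀) * (w ζ : ℂ) ∂μ).re := by simp [h]
      _ = ∫ ζ, (starRingEnd ℂ z₀ * ((ζ - z₀) * (w ζ : ℂ))).re ∂μ := by
        rw [← integral_const_mul]; exact (integral_re hi).symm
      _ ≤ ∫ ζ, -d * w ζ ∂μ := by
        refine integral_mono_ae hi.re (hwi.const_mul _) ?_
        filter_upwards [ae_mem_measSupp μ] with ζ hζ
        have hζB : ‖ζ‖ ≤ B := by simpa using hB hζ
        rw [← mul_assoc, mul_comm, Complex.re_ofReal_mul, mul_comm (-d)]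
        exact mul_le_mul_of_nonneg_left (re_conj_mul_sub_le hζB) (hw ζ)
      _ = -d * ∫ ζ, w ζ ∂μ := integral_const_mul _ _
  have hw0 : ∫ ζ, w ζ ∂μ = 0 := le_antisymm (by nlinarith) (integral_nonneg hw)
  exact (integral_eq_zero_iff_of_nonneg hw hwi).mp hw0

lemma norm_le_of_isRoot_of_orthogonal (hinf : (measSupp μ).Infinite) (hB₀ : 0 ≤ B)
    (hB : measSupp μ ⊆ closedBall 0 B) {P : ℂ[X]} (hP : P ≠ 0)
    (horth : ∀ q : ℂ[X], q.degree < P.degree →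
      innerMu μ (fun z => P.eval z) (fun z => q.eval z) = 0)
    {z₀ : ℂ} (hz₀ : P.IsRoot z₀) : ‖z₀‖ ≤ B := by
  by_contra! hB'
  obtain ⟨q, rfl⟩ := dvd_iff_isRoot.mpr hz₀
  have hq : q ≠ 0 := right_ne_zero_of_mul hP
  have hdeg : q.degree < ((X - C z₀) * q).degree := by
    rw [degree_mul, degree_X_sub_C, degree_eq_natDegree hq]
    exact_mod_cast Nat.lt_one_add_iff.mpr le_rfl
  have hint : ∫ ζ, (ζ - z₀) * (Complex.normSq (q.eval ζ) : ℂ) ∂μ = 0 := by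
    rw [← horth q hdeg, innerMu]
    congr 1 with ζ
    simp [mul_assoc, Complex.mul_conj]
  have hae := ae_eq_zero_of_integral_sub_mul_eq_zero hB₀ hB hB'
    (fun ζ => Complex.normSq_nonneg _) (by fun_prop) hint
  exact hq (eq_zero_of_ae_eval_eq_zero hinf (hae.mono fun ζ h => Complex.normSq_eq_zero.mp h))

end Zeros

section ResidueAtInfinity

open Metric Bornology Complex Real

variable {B R : ℝ}

lemma circleIntegral_eq_zero_of_tendsto_mul_cobounded {F : ℂ → ℂ} (hB : 0 ≤ B) (hBR : B < R)
    (hF : ∀ z : ℂ, B < ‖z‖ → DifferentiableAt ℂ F z)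
    (hlim : Tendsto (fun z => z * F z) (cobounded ℂ) (𝓝 0)) :
    (∮ z in C(0, R), F z) = 0 := by
  have hR : 0 < R := hB.trans_lt hBR
  have hconst : ∀ R' ≥ R, (∮ z in C(0, R'), F z) = ∮ z in C(0, R), F z := fun R' hR' =>
    circleIntegral_eq_of_differentiable_on_annulus_off_countable hR hR' countable_empty
      (fun z hz => (hF z (hBR.trans_le (by simpa using hz.2))).continuousAt.continuousWithinAt)
      (fun z hz => hF z (hBR.trans (by simpa using hz.1.2)))
  refine norm_le_zero_iff.mp (le_of_forall_pos_le_add fun ε hε => ?_)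
  obtain ⟨M, -, hM⟩ := hasBasis_cobounded_norm.eventually_iff.mp
    (hlim.eventually (closedBall_mem_nhds 0 (by positivity : 0 < ε / (2 * π))))
  set R' := max R M
  have hR' : 0 < R' := hR.trans_le (le_max_left _ _)
  rw [← hconst R' (le_max_left _ _), zero_add]
  calc ‖∮ z in C(0, R'), F z‖ ≤ 2 * π * R' * (ε / (2 * π) / R') := by
        refine circleIntegral.norm_integral_le_of_norm_le_const hR'.le fun z hz => ?_
        rw [mem_sphere_zero_iff_norm] at hz
        have := hM (hz ▸ le_max_right R M : M ≤ ‖z‖)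
        rw [dist_zero_right, norm_mul, hz] at this
        rwa [le_div_iff₀ hR', mul_comm]
    _ = ε := by field_simp

lemma circleIntegral_eq_of_tendsto_mul_cobounded {g : ℂ → ℂ} {L : ℂ} (hB : 0 ≤ B) (hBR : B < R)
    (hg : ∀ z : ℂ, B < ‖z‖ → DifferentiableAt ℂ g z)
    (hlim : Tendsto (fun z => z * g z) (cobounded ℂ) (𝓝 L)) :
    (∮ z in C(0, R), g z) = 2 * π * I * L := by
  have hR : 0 < R := hB.trans_lt hBR
  have hne : ∀ z : ℂ, B < ‖z‖ → z ≠ 0 := fun z hz => norm_pos_iff.mp (hB.trans_lt hz)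
  have hF : (∮ z in C(0, R), (g z - L * z⁻¹)) = 0 := by
    refine circleIntegral_eq_zero_of_tendsto_mul_cobounded hB hBR
      (fun z hz => (hg z hz).sub ((differentiableAt_inv (hne z hz)).const_mul L)) ?_
    rw [← sub_self L]
    refine (hlim.sub_const L).congr' ?_
    filter_upwards [eventually_cobounded_le_norm (B + 1)] with z hz
    field_simp [hne z (by linarith)]
  have hsphere : ∀ z ∈ sphere (0 : ℂ) R, B < ‖z‖ := fun z hz => by
    rwa [mem_sphere_zero_iff_norm.mp hz]
  have hinv : (∮ z in C(0, R), L * z⁻¹) = 2 * π * I * L := by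
    rw [circleIntegral.integral_const_mul, mul_comm]
    congr 1
    simpa using circleIntegral.integral_sub_inv_of_mem_ball (mem_ball_self hR (x := (0 : ℂ)))
  have hsub := circleIntegral.integral_sub (f := g) (g := fun z => L * z⁻¹)
    ((continuousOn_of_forall_continuousAt fun z hz => (hg z (hsphere z hz)).continuousAt)
      |>.circleIntegrable hR.le)
    ((continuousOn_const.mul (continuousOn_inv₀.mono fun z hz => hne z (hsphere z hz)))
      |>.circleIntegrable hR.le)
  linear_combination hinv - hsub + hF

end ResidueAtInfinity

section ResidueApplications

open Asymptotics Bornology Complex Real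

variable {B R : ℝ}

lemma Polynomial.tendsto_mul_eval_div_eval_cobounded {P Q : ℂ[X]} (hP : P ≠ 0)
    (hPQ : Q.natDegree = P.natDegree + 1) :
    Tendsto (fun z => z * (P.eval z / Q.eval z)) (cobounded ℂ)
      (𝓝 (P.leadingCoeff / Q.leadingCoeff)) := by
  have hXP : (fun z => z * P.eval z) ~[cobounded ℂ]
      fun z => P.leadingCoeff * z ^ (P.natDegree + 1) := by
    convert isEquivalent_cobounded_leading_monomial (P := X * P) using 3 with z z
    · simp
    · simp
    · rw [natDegree_X_mul hP]
  have hQ : Q.eval ~[cobounded ℂ] fun z => Q.leadingCoeff * z ^ (P.natDegree + 1) :=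
    hPQ ▸ isEquivalent_cobounded_leading_monomial
  refine (hXP.div hQ).symm.tendsto_nhds (tendsto_const_nhds.congr' ?_) |>.congr fun z => ?_
  · filter_upwards [eventually_cobounded_le_norm 1] with z hz
    have hz : z ≠ 0 := norm_pos_iff.mp (one_pos.trans_le hz)
    simp [mul_div_mul_right _ _ (pow_ne_zero _ hz)]
  · simp [mul_div_assoc]

lemma Polynomial.circleIntegral_eval_div_eval {P Q : ℂ[X]} (hP : P ≠ 0)
    (hPQ : Q.natDegree = P.natDegree + 1) (hB : 0 ≤ B) (hBR : B < R)
    (hQ : ∀ z : ℂ, B < ‖z‖ → Q.eval z ≠ 0) :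
    (∮ z in C(0, R), P.eval z / Q.eval z) = 2 * π * I * (P.leadingCoeff / Q.leadingCoeff) :=
  circleIntegral_eq_of_tendsto_mul_cobounded hB hBR
    (fun z hz => P.differentiableAt.div Q.differentiableAt (hQ z hz))
    (tendsto_mul_eval_div_eval_cobounded hP hPQ)

lemma circleIntegral_one_div_eq_of_tendsto_div {Φ : ℂ → ℂ} {γ : ℂ} (hγ : γ ≠ 0) (hB : 0 ≤ B)
    (hBR : B < R) (hΦ : ∀ z : ℂ, B < ‖z‖ → DifferentiableAt ℂ Φ z ∧ Φ z ≠ 0)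
    (hlim : Tendsto (fun z => Φ z / z) (cobounded ℂ) (𝓝 γ)) :
    (∮ z in C(0, R), 1 / Φ z) = 2 * π * I * γ⁻¹ :=
  circleIntegral_eq_of_tendsto_mul_cobounded hB hBR
    (fun z hz => (differentiableAt_const 1).div (hΦ z hz).1 (hΦ z hz).2)
    ((hlim.inv₀ hγ).congr fun z => by rw [inv_div, mul_one_div])

end ResidueApplications

open Metric Complex Real in
theorem lemma2_general
    (μ : Measure ℂ) [IsFiniteMeasure μ]
    (hsuppInf : (measSupp μ).Infinite)
    (E : Set ℂ) (hEcomp : IsCompact E) (hsuppE : measSupp μ ⊆ E)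
    (p : ℕ → Polynomial ℂ)
    (hdeg : ∀ n : ℕ, (p n).degree = n)
    (horth : ∀ n k : ℕ,
      innerMu μ (fun z => (p n).eval z) (fun z => (p k).eval z) = if n = k then 1 else 0)
    (Φ : ℂ → ℂ) (γ : ℝ) (hγ : 0 < γ)
    (hΦdiff : DifferentiableOn ℂ Φ Eᶜ)
    (hΦbij : Set.BijOn Φ Eᶜ {w : ℂ | 1 < ‖w‖})
    (hΦasym : Tendsto (fun z => Φ z / z) (Bornology.cobounded ℂ) (𝓝 (γ : ℂ)))
    (hR : ∀ K : Set ℂ, K ⊆ Eᶜ → IsCompact K →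
      TendstoUniformlyOn (fun (n : ℕ) (z : ℂ) => (p n).eval z / (p (n + 1)).eval z)
        (fun z => 1 / Φ z) atTop K)
    :
    Tendsto (fun n : ℕ => (p n).leadingCoeff / (p (n + 1)).leadingCoeff)
      atTop (𝓝 (1 / (γ : ℂ))) := by
  obtain ⟨B, hB, hEB⟩ := hEcomp.isBounded.subset_closedBall_lt 0 0
  have hout : ∀ z : ℂ, B < ‖z‖ → z ∈ Eᶜ := fun z hz hzE =>
    (hz.trans_le (by simpa using hEB hzE)).false
  have hp0 : ∀ n, p n ≠ 0 := fun n h => by simpa [h] using hdeg n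
  have hroot : ∀ n z, B < ‖z‖ → (p n).eval z ≠ 0 := fun n z hz h0 =>
    (norm_le_of_isRoot_of_orthogonal hsuppInf hB.le (hsuppE.trans hEB) (hp0 n) (fun q hq =>
      innerMu_eq_zero_of_degree_lt (isCompact_closedBall 0 B) (hsuppE.trans hEB)
        (p n).continuous (fun k _ => hdeg k) (fun k hk => by simp [horth, hk.ne']) q
        (hdeg n ▸ hq)) h0).not_gt hz
  have hΦ : ∀ z : ℂ, B < ‖z‖ → DifferentiableAt ℂ Φ z ∧ Φ z ≠ 0 := fun z hz =>
    ⟨hΦdiff.differentiableAt (hEcomp.isClosed.isOpen_compl.mem_nhds (hout z hz)),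
      fun h => (by norm_num [h] : ¬ (1 : ℝ) < ‖Φ z‖) (hΦbij.mapsTo (hout z hz))⟩
  have hsphere : sphere (0 : ℂ) (B + 1) ⊆ {z | B < ‖z‖} := fun z hz => by
    simp [mem_sphere_zero_iff_norm.mp hz]
  have hint : ∀ n, (∮ z in C(0, B + 1), (p n).eval z / (p (n + 1)).eval z) =
      2 * π * I * ((p n).leadingCoeff / (p (n + 1)).leadingCoeff) := fun n =>
    circleIntegral_eval_div_eval (hp0 n)
      (by simp [natDegree_eq_of_degree_eq_some (hdeg _)]) hB.le (lt_add_one B) (hroot (n + 1))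
  have hconv := (hR _ (fun z hz => hout z (hsphere hz)) (isCompact_sphere 0 (B + 1)))
    |>.tendsto_circleIntegral_of_continuousOn (by positivity) (Eventually.of_forall fun n =>
      (p n).continuousOn.div (p (n + 1)).continuousOn fun z hz => hroot _ z (hsphere hz))
  simp only [Pi.div_apply, hint, circleIntegral_one_div_eq_of_tendsto_div
    (by exact_mod_cast hγ.ne' : (γ : ℂ) ≠ 0) hB.le (lt_add_one B) hΦ hΦasym] at hconv
  have h2πI : (2 * π * I : ℂ) ≠ 0 := by simp [pi_ne_zero]
  simpa only [inv_mul_cancel_left₀ h2πI, one_div] using hconv.const_mul (2 * π * I)⁻¹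

/-- **Lemma 2.** If `μ ∈ R(E)` then `κ_n/κ_{n+1} → 1/γ`, where `γ = lim_{z→∞} Φ(z)/z`
(so that `1/γ = cap(E)` under the paper's normalization). Here `κ_n` is the (positive)
leading coefficient of the orthonormal polynomial `p_n`. -/
theorem lemma2
    (μ : Measure ℂ) [IsFiniteMeasure μ]
    (hsuppInf : (measSupp μ).Infinite)
    (E : Set ℂ) (hEcomp : IsCompact E) (hsuppE : measSupp μ ⊆ E)
    (p : ℕ → Polynomial ℂ)
    (hdeg : ∀ n : ℕ, (p n).degree = n)
    (hlead : ∀ n : ℕ, 0 < ((p n).leadingCoeff).re ∧ ((p n).leadingCoeff).im = 0)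
    (horth : ∀ n k : ℕ,
      innerMu μ (fun z => (p n).eval z) (fun z => (p k).eval z) = if n = k then 1 else 0)
    (Φ : ℂ → ℂ) (γ : ℝ) (hγ : 0 < γ)
    (hΦdiff : DifferentiableOn ℂ Φ Eᶜ)
    (hΦbij : Set.BijOn Φ Eᶜ {w : ℂ | 1 < ‖w‖})
    (hΦasym : Tendsto (fun z => Φ z / z) (Bornology.cobounded ℂ) (𝓝 (γ : ℂ)))
    (Ψ : ℂ → ℂ) (hΨcont : ContinuousOn Ψ {w : ℂ | 1 ≤ ‖w‖})
    (hΨinv : ∀ w : ℂ, 1 < ‖w‖ → Ψ w ∈ Eᶜ ∧ Φ (Ψ w) = w)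
    (hR : ∀ K : Set ℂ, K ⊆ Eᶜ → IsCompact K →
      TendstoUniformlyOn (fun (n : ℕ) (z : ℂ) => (p n).eval z / (p (n + 1)).eval z)
        (fun z => 1 / Φ z) atTop K)
    :
    Tendsto (fun n : ℕ => (p n).leadingCoeff / (p (n + 1)).leadingCoeff)
      atTop (𝓝 (1 / (γ : ℂ))) :=
  lemma2_general μ hsuppInf E hEcomp hsuppE p hdeg horth Φ γ hγ hΦdiff hΦbij hΦasym hR
end

section
/- Suppose μ ∈ R(E). Then |p_n(z)|^{1/n} → |Φ(z)| as n → ∞, uniformly on every compact subset of ℂ∖E. -/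
/-!
Write `v n = log |p_n|` and `L = log |Φ|`. Ratio asymptotics say that the increments
`v (n+1) - v n` tend to `L` uniformly on `K`, so the Cesàro means `v n / n` do as well;
exponentiating gives `|p_n|^{1/n} → |Φ|`. Passing through `log` and `exp` is harmless because on
`K` the limits stay in a compact set on which these maps are uniformly continuous (`Φ` has no
zeros there, hence neither has `p_n` for large `n`).
-/

open MeasureTheory Polynomial Filter Topology Set
open scoped ENNReal

open Metric

section UniformComposition

variable {ι α β γ : Type*} [PseudoMetricSpace β] {p : Filter ι} {F : ι → α → β}
  {f : α → β} {K : Set α} {S U : Set β}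

theorem TendstoUniformlyOn.eventually_mapsTo_cthickening (h : TendstoUniformlyOn F f p K)
    (hf : MapsTo f K S) {δ : ℝ} (hδ : 0 < δ) :
    ∀ᶠ i in p, MapsTo (F i) K (cthickening δ S) :=
  (Metric.tendstoUniformlyOn_iff.1 h δ hδ).mono fun _ hi x hx =>
    mem_cthickening_of_dist_le _ _ _ _ (hf hx) (dist_comm (f x) _ ▸ (hi x hx).le)

theorem TendstoUniformlyOn.eventually_mapsTo_of_isCompact (h : TendstoUniformlyOn F f p K)
    (hf : MapsTo f K S) (hS : IsCompact S) (hU : IsOpen U) (hSU : S ⊆ U) :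
    ∀ᶠ i in p, MapsTo (F i) K U := by
  obtain ⟨δ, hδ, hδU⟩ := hS.exists_cthickening_subset_open hU hSU
  exact (h.eventually_mapsTo_cthickening hf hδ).mono fun _ hi => hi.mono_right hδU

theorem TendstoUniformlyOn.comp_continuousOn [ProperSpace β] [UniformSpace γ] {g : β → γ}
    (h : TendstoUniformlyOn F f p K) (hf : MapsTo f K S) (hS : IsCompact S) (hU : IsOpen U)
    (hSU : S ⊆ U) (hg : ContinuousOn g U) :
    TendstoUniformlyOn (fun i x => g (F i x)) (fun x => g (f x)) p K := by
  obtain ⟨δ, hδ, hδU⟩ := hS.exists_cthickening_subset_open hU hSU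
  exact (hS.cthickening.uniformContinuousOn_of_continuous (hg.mono hδU))
    |>.comp_tendstoUniformlyOn_eventually (h.eventually_mapsTo_cthickening hf hδ)
      (fun x hx => self_subset_cthickening S (hf hx)) h

end UniformComposition

theorem abs_sub_natCast_mul_le {u : ℕ → ℝ} {c δ : ℝ} {N n : ℕ} (hδ : 0 ≤ δ) (hNn : N ≤ n)
    (h : ∀ k, N ≤ k → k < n → |u (k + 1) - u k - c| ≤ δ) :
    |u n - n * c| ≤ |u N - N * c| + n * δ := by
  have hsum := dist_le_Ico_sum_of_dist_le (f := fun k => u k - k * c) (d := fun _ => δ) hNn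
    fun {k} hk hkn => by
      rw [Real.dist_eq, abs_sub_comm]
      convert h k hk hkn using 2
      push_cast
      ring
  simp only [Finset.sum_const, Nat.card_Ico, nsmul_eq_mul, Nat.cast_sub hNn] at hsum
  have hrev : |u n - n * c| - |u N - N * c| ≤ dist (u N - N * c) (u n - n * c) := by
    rw [dist_comm, Real.dist_eq]
    exact abs_sub_abs_le_abs_sub _ _
  linarith [mul_nonneg (N.cast_nonneg : (0 : ℝ) ≤ N) hδ]

theorem tendstoUniformlyOn_div_natCast_of_tendstoUniformlyOn_sub {α : Type*} {v : ℕ → α → ℝ}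
    {L : α → ℝ} {K : Set α}
    (hd : TendstoUniformlyOn (fun n x => v (n + 1) x - v n x) L atTop K)
    (hL : ∃ C, ∀ x ∈ K, |L x| ≤ C) (hv : ∀ᶠ N in atTop, ∃ M, ∀ x ∈ K, |v N x| ≤ M) :
    TendstoUniformlyOn (fun n x => v n x / n) L atTop K := by
  obtain ⟨C, hC⟩ := hL
  rw [Metric.tendstoUniformlyOn_iff]
  intro ε hε
  obtain ⟨N₀, hN₀⟩ :=
    eventually_atTop.1 (Metric.tendstoUniformlyOn_iff.1 hd (ε / 2) (half_pos hε))
  obtain ⟨N, ⟨M, hM⟩, hN⟩ := (hv.and (eventually_ge_atTop N₀)).exists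
  filter_upwards [eventually_ge_atTop (max N 1),
    tendsto_natCast_atTop_atTop.eventually_gt_atTop (2 * (M + N * C) / ε)] with n hn hlarge x hx
  have hn0 : (0 : ℝ) < n := by exact_mod_cast (le_max_right N 1).trans hn
  have htel := abs_sub_natCast_mul_le (u := fun k => v k x) (c := L x) (half_pos hε).le
    ((le_max_left N 1).trans hn) fun k hk _ => by
      have hk := (hN₀ k (hN.trans hk) x hx).le
      rwa [Real.dist_eq, abs_sub_comm] at hk
  have hstart : |v N x - N * L x| ≤ M + N * C := by
    calc |v N x - N * L x| ≤ |v N x| + |N * L x| := abs_sub _ _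
      _ ≤ M + N * C := by
        rw [abs_mul, Nat.abs_cast]
        exact add_le_add (hM x hx) (mul_le_mul_of_nonneg_left (hC x hx) N.cast_nonneg)
  rw [div_lt_iff₀ hε] at hlarge
  rw [dist_comm, Real.dist_eq, show v n x / n - L x = (v n x - n * L x) / n by field_simp,
    abs_div, Nat.abs_cast, div_lt_iff₀ hn0]
  linarith

section RatioAsymptotics

variable {α 𝕜 : Type*} [NormedField 𝕜] {q : ℕ → α → 𝕜} {g : α → 𝕜} {K : Set α}

theorem image_one_div_subset_compl_zero (hg0 : ∀ z ∈ K, g z ≠ 0) :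
    (fun z => 1 / g z) '' K ⊆ {0}ᶜ := by
  rintro _ ⟨z, hz, rfl⟩
  simpa using hg0 z hz

variable [TopologicalSpace α] (hK : IsCompact K) (hg : ContinuousOn g K) (hg0 : ∀ z ∈ K, g z ≠ 0)
  (h : TendstoUniformlyOn (fun n z => q n z / q (n + 1) z) (fun z => 1 / g z) atTop K)
include hK hg hg0 h

theorem eventually_forall_ne_zero_of_tendstoUniformlyOn_div :
    ∀ᶠ n in atTop, ∀ z ∈ K, q n z ≠ 0 :=
  (h.eventually_mapsTo_of_isCompact (mapsTo_image _ _)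
    (hK.image_of_continuousOn (continuousOn_const.div hg hg0)) isOpen_compl_singleton
    (image_one_div_subset_compl_zero hg0)).mono fun _ hn _ hz => (div_ne_zero_iff.1 (hn hz)).1

variable [ProperSpace 𝕜] in
theorem tendstoUniformlyOn_log_norm_sub_of_tendstoUniformlyOn_div :
    TendstoUniformlyOn (fun n z => Real.log ‖q (n + 1) z‖ - Real.log ‖q n z‖)
      (fun z => Real.log ‖g z‖) atTop K := by
  have hne := eventually_forall_ne_zero_of_tendstoUniformlyOn_div hK hg hg0 h
  refine (h.comp_continuousOn (g := fun w => -Real.log ‖w‖) (mapsTo_image _ _)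
    (hK.image_of_continuousOn (continuousOn_const.div hg hg0)) isOpen_compl_singleton
    (image_one_div_subset_compl_zero hg0)
    (continuous_norm.continuousOn.log fun w hw => norm_ne_zero_iff.2 hw).neg).congr ?_
    |>.congr_right fun z _ => by simp
  filter_upwards [hne, (tendsto_add_atTop_nat 1).eventually hne] with n hn hn1 z hz
  simp [Real.log_div (norm_ne_zero_iff.2 (hn z hz)) (norm_ne_zero_iff.2 (hn1 z hz))]

end RatioAsymptotics

theorem nthRoot_asymptotics_p_general
    (E : Set ℂ)
    (p : ℕ → Polynomial ℂ)
    (Φ : ℂ → ℂ)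
    (hΦdiff : DifferentiableOn ℂ Φ Eᶜ)
    (hΦbij : Set.BijOn Φ Eᶜ {w : ℂ | 1 < ‖w‖})
    (hR : ∀ K : Set ℂ, K ⊆ Eᶜ → IsCompact K →
      TendstoUniformlyOn (fun (n : ℕ) (z : ℂ) => (p n).eval z / (p (n + 1)).eval z)
        (fun z => 1 / Φ z) atTop K)
    :
    ∀ K : Set ℂ, K ⊆ Eᶜ → IsCompact K →
      TendstoUniformlyOn
        (fun (n : ℕ) (z : ℂ) => ‖(p n).eval z‖ ^ ((1 : ℝ) / n))
        (fun z => ‖Φ z‖) atTop K := by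
  intro K hKE hKc
  have hΦK : ContinuousOn Φ K := hΦdiff.continuousOn.mono hKE
  have hΦpos : ∀ z ∈ K, 0 < ‖Φ z‖ := fun z hz => one_pos.trans (hΦbij.mapsTo (hKE hz))
  have hΦne : ∀ z ∈ K, Φ z ≠ 0 := fun z hz => norm_pos_iff.1 (hΦpos z hz)
  have hpne := eventually_forall_ne_zero_of_tendstoUniformlyOn_div hKc hΦK hΦne (hR K hKE hKc)
  have hLcont : ContinuousOn (fun z => Real.log ‖Φ z‖) K :=
    hΦK.norm.log fun z hz => (hΦpos z hz).ne'
  have hroot := tendstoUniformlyOn_div_natCast_of_tendstoUniformlyOn_sub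
    (tendstoUniformlyOn_log_norm_sub_of_tendstoUniformlyOn_div hKc hΦK hΦne (hR K hKE hKc))
    (by simpa using hKc.exists_bound_of_continuousOn hLcont)
    (hpne.mono fun N hN => by
      simpa using hKc.exists_bound_of_continuousOn
        ((p N).continuous.continuousOn.norm.log fun z hz => norm_ne_zero_iff.2 (hN z hz)))
  refine (hroot.comp_continuousOn (mapsTo_image _ _) (hKc.image_of_continuousOn hLcont)
    isOpen_univ (subset_univ _) Real.continuous_exp.continuousOn).congr ?_
    |>.congr_right fun z hz => by simp [Real.exp_log (hΦpos z hz)]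
  filter_upwards [hpne] with n hn z hz
  simp only [Real.rpow_def_of_pos (norm_pos_iff.2 (hn z hz)), mul_one_div]

/-- If `μ ∈ R(E)`, then `|p_n(z)|^{1/n} → |Φ(z)|` uniformly on every compact subset
of `ℂ∖E`. -/
theorem nthRoot_asymptotics_p
    (μ : Measure ℂ) [IsFiniteMeasure μ]
    (hsuppInf : (measSupp μ).Infinite)
    (E : Set ℂ) (hEcomp : IsCompact E) (hsuppE : measSupp μ ⊆ E)
    (p : ℕ → Polynomial ℂ)
    (hdeg : ∀ n : ℕ, (p n).degree = n)
    (hlead : ∀ n : ℕ, 0 < ((p n).leadingCoeff).re ∧ ((p n).leadingCoeff).im = 0)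
    (horth : ∀ n k : ℕ,
      innerMu μ (fun z => (p n).eval z) (fun z => (p k).eval z) = if n = k then 1 else 0)
    (Φ : ℂ → ℂ) (γ : ℝ) (hγ : 0 < γ)
    (hΦdiff : DifferentiableOn ℂ Φ Eᶜ)
    (hΦbij : Set.BijOn Φ Eᶜ {w : ℂ | 1 < ‖w‖})
    (hΦasym : Tendsto (fun z => Φ z / z) (Bornology.cobounded ℂ) (𝓝 (γ : ℂ)))
    (Ψ : ℂ → ℂ) (hΨcont : ContinuousOn Ψ {w : ℂ | 1 ≤ ‖w‖})
    (hΨinv : ∀ w : ℂ, 1 < ‖w‖ → Ψ w ∈ Eᶜ ∧ Φ (Ψ w) = w)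
    (hR : ∀ K : Set ℂ, K ⊆ Eᶜ → IsCompact K →
      TendstoUniformlyOn (fun (n : ℕ) (z : ℂ) => (p n).eval z / (p (n + 1)).eval z)
        (fun z => 1 / Φ z) atTop K)
    :
    ∀ K : Set ℂ, K ⊆ Eᶜ → IsCompact K →
      TendstoUniformlyOn
        (fun (n : ℕ) (z : ℂ) => ‖(p n).eval z‖ ^ ((1 : ℝ) / n))
        (fun z => ‖Φ z‖) atTop K :=
  nthRoot_asymptotics_p_general E p Φ hΦdiff hΦbij hR
end
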